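/- arXiv:2509.03714 — 4 statements merged into one kernel-verified Lean document; each statement's English description precedes it below -/
import Mathlib

section
/- Let X be a real d×d matrix with ‖X‖ < 2π (matrices carrying a Banach-algebra norm), and suppose the matrix γ_u(−X) := ∑_{k=0}^∞ (B'_k/k!)·(−X)^k is invertible. Then γ_u(X)·(γ_u(−X))⁻¹ = exp(X), and consequently det(γ_u(X)·(γ_u(−X))⁻¹) = exp(trace X). -/
/-!
Write `B(x) = x / (eˣ - 1) = ∑ Bₖ xᵏ / k!` for the generating function of the Bernoulli
numbers with `B₁ = -1/2`. The series with `B'ₖ` is `B(-x) = x eˣ / (eˣ - 1) = eˣ B(x)`. Since `B`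
has radius of convergence `2π`, for `‖X‖ < 2π` the Cauchy product of the exponential series with
`γ_u(-X) = ∑ Bₖ Xᵏ / k!` converges absolutely, and the power series identity gives
`γ_u(X) = exp X · γ_u(-X)`.

For the determinant, `t ↦ det (exp (t • X))` is multiplicative in `t`, and by Jacobi's formula
at the identity its derivative at `0` is `trace X`; hence it equals `t ↦ exp (t · trace X)`.
-/

open scoped Matrix

attribute [local instance] Matrix.linftyOpNormedRing Matrix.linftyOpNormedAlgebra

/-- The universal matrix `γ_u(X) := ∑_{k=0}^∞ (B'_k/k!)·X^k`, with `B'_k` the Bernoulli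
numbers with convention `B'_1 = +1/2`. -/
noncomputable def gammaU {d : ℕ} (X : Matrix (Fin d) (Fin d) ℝ) : Matrix (Fin d) (Fin d) ℝ :=
  ∑' k : ℕ, ((bernoulli' k : ℝ) / (Nat.factorial k : ℝ)) • X ^ k

open Real Nat

-- Euler: `|B₂ₘ| / (2m)! = 2 ζ(2m) / (2π)^(2m)`, and `ζ(2m) ≤ ζ(2) = π² / 6`.
theorem abs_bernoulli_two_mul_div_factorial_le {m : ℕ} (hm : m ≠ 0) :
    |(bernoulli (2 * m) : ℝ)| / (2 * m)! ≤ π ^ 2 / 3 / (2 * π) ^ (2 * m) := by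
  have hζ := hasSum_zeta_nat hm
  have hζ_le : (-1 : ℝ) ^ (m + 1) * 2 ^ (2 * m - 1) * π ^ (2 * m) * bernoulli (2 * m) / (2 * m)!
      ≤ π ^ 2 / 6 := by
    refine hasSum_le (fun n => ?_) hζ hasSum_zeta_two
    rcases n.eq_zero_or_pos with rfl | hn
    · simp [hm]
    · gcongr
      · exact_mod_cast hn
      · omega
  have hζ_abs :
      |(-1 : ℝ) ^ (m + 1) * 2 ^ (2 * m - 1) * π ^ (2 * m) * bernoulli (2 * m) / (2 * m)!| =
        (2 * π) ^ (2 * m) / 2 * (|(bernoulli (2 * m) : ℝ)| / (2 * m)!) := by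
    have h2 : (2 : ℝ) ^ (2 * m) = 2 * 2 ^ (2 * m - 1) := (mul_pow_sub_one (by omega) _).symm
    simp only [abs_div, abs_mul, abs_pow, abs_neg, abs_one, one_pow, abs_two, abs_of_pos pi_pos,
      Nat.abs_cast, mul_pow, h2]
    ring
  rw [abs_of_nonneg (hζ.nonneg fun _ => by positivity)] at hζ_abs
  rw [le_div_iff₀ (by positivity)]
  linarith

theorem abs_bernoulli_div_factorial_le (k : ℕ) :
    |(bernoulli k : ℝ)| / k ! ≤ π ^ 2 / 3 / (2 * π) ^ k := by
  obtain ⟨m, rfl | rfl⟩ := k.even_or_odd'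
  · rcases eq_or_ne m 0 with rfl | hm
    · norm_num
      nlinarith [pi_gt_three]
    · exact abs_bernoulli_two_mul_div_factorial_le hm
  · rcases eq_or_ne m 0 with rfl | hm
    · norm_num [bernoulli_one]
      rw [le_div_iff₀ (by positivity)]
      nlinarith [pi_gt_three]
    · rw [bernoulli_eq_zero_of_odd (odd_two_mul_add_one m) (by omega)]
      simp only [Rat.cast_zero, abs_zero, zero_div]
      positivity

theorem summable_norm_bernoulli_smul_pow {A : Type*} [NormedRing A] [NormedAlgebra ℝ A] {a : A}
    (ha : ‖a‖ < 2 * π) : Summable fun k => ‖(bernoulli k / k ! : ℝ) • a ^ k‖ := by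
  set r := ‖a‖ / (2 * π)
  have hr : r < 1 := (div_lt_one (by positivity)).mpr ha
  rw [← summable_nat_add_iff 1]
  refine ((summable_geometric_of_lt_one (by positivity) hr).mul_left (π ^ 2 / 3 * r))
    |>.of_nonneg_of_le (fun _ => norm_nonneg _) fun k => ?_
  calc ‖(bernoulli (k + 1) / (k + 1)! : ℝ) • a ^ (k + 1)‖
      ≤ |(bernoulli (k + 1) : ℝ)| / (k + 1)! * ‖a‖ ^ (k + 1) := by
        rw [norm_smul, Real.norm_eq_abs, abs_div, Nat.abs_cast]
        gcongr
        exact norm_pow_le' a k.succ_pos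
    _ ≤ π ^ 2 / 3 / (2 * π) ^ (k + 1) * ‖a‖ ^ (k + 1) := by
        gcongr ?_ * _
        exact abs_bernoulli_div_factorial_le _
    _ = π ^ 2 / 3 * r * r ^ k := by
        rw [mul_assoc, ← _root_.pow_succ', div_pow]
        ring

open PowerSeries in
theorem bernoulliPowerSeries_mul_exp (A : Type*) [CommRing A] [Algebra ℚ A] [IsDomain A] :
    bernoulliPowerSeries A * exp A = bernoulli'PowerSeries A := by
  have hne : exp A - 1 ≠ 0 := fun h => by
    simpa [coeff_one] using congrArg (coeff 1) h
  refine mul_right_cancel₀ hne ?_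
  rw [mul_right_comm, bernoulliPowerSeries_mul_exp_sub_one, bernoulli'PowerSeries_mul_exp_sub_one]

theorem sum_antidiagonal_inv_factorial_mul_bernoulli (n : ℕ) :
    ∑ p ∈ Finset.HasAntidiagonal.antidiagonal n, (p.1 ! : ℝ)⁻¹ * (bernoulli p.2 / p.2 !) =
      bernoulli' n / n ! := by
  have h := congrArg (PowerSeries.coeff n) (bernoulliPowerSeries_mul_exp ℝ)
  rw [mul_comm, PowerSeries.coeff_mul] at h
  simpa [bernoulliPowerSeries, bernoulli'PowerSeries, PowerSeries.coeff_exp] using h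

theorem tsum_bernoulli'_smul_neg_pow {A : Type*} [Ring A] [Algebra ℝ A] [TopologicalSpace A]
    (a : A) :
    ∑' k, (bernoulli' k / k ! : ℝ) • (-a) ^ k = ∑' k, (bernoulli k / k ! : ℝ) • a ^ k := by
  refine tsum_congr fun k => ?_
  rw [← neg_one_smul ℝ a, smul_pow, smul_smul, bernoulli'_eq_bernoulli]
  congr 1
  push_cast
  rw [mul_div_assoc, mul_right_comm, ← pow_add, ← two_mul, pow_mul, neg_one_sq, one_pow, one_mul]

theorem exp_mul_tsum_bernoulli_smul_pow {A : Type*} [NormedRing A] [NormedAlgebra ℝ A]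
    [CompleteSpace A] {a : A} (ha : ‖a‖ < 2 * π) :
    NormedSpace.exp a * ∑' k, (bernoulli k / k ! : ℝ) • a ^ k =
      ∑' k, (bernoulli' k / k ! : ℝ) • a ^ k := by
  rw [NormedSpace.exp_eq_tsum (𝕂 := ℝ), tsum_mul_tsum_eq_tsum_sum_antidiagonal_of_summable_norm
    (NormedSpace.norm_expSeries_summable' a) (summable_norm_bernoulli_smul_pow ha)]
  refine tsum_congr fun n => ?_
  rw [← sum_antidiagonal_inv_factorial_mul_bernoulli, Finset.sum_smul]
  refine Finset.sum_congr rfl fun p hp => ?_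
  rw [smul_mul_smul_comm, ← pow_add, Finset.HasAntidiagonal.mem_antidiagonal.mp hp]

theorem Real.eq_exp_mul_of_map_add_eq_mul {f : ℝ → ℝ} {c : ℝ}
    (hadd : ∀ s t, f (s + t) = f s * f t) (h0 : f 0 = 1) (hf : HasDerivAt f c 0) (t : ℝ) :
    f t = Real.exp (t * c) := by
  have hderiv : ∀ t, HasDerivAt f (f t * c) t := fun t => by
    have hshift := (HasDerivAt.comp_sub_const t t (by rwa [sub_self])).const_mul (f t)
    have hf_eq : (fun s => f t * f (s - t)) = f :=
      funext fun s => by rw [← hadd, add_sub_cancel]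
    rwa [hf_eq] at hshift
  have hg : ∀ s, HasDerivAt (fun s => f s * Real.exp (-(s * c))) 0 s := fun s =>
    ((hderiv s).mul (hasDerivAt_mul_const c).neg.exp).congr_deriv (by ring)
  have hconst := is_const_of_deriv_eq_zero (fun s => (hg s).differentiableAt)
    (fun s => (hg s).deriv) t 0
  rw [h0, zero_mul, neg_zero, Real.exp_zero, mul_one, Real.exp_neg] at hconst
  field_simp at hconst
  exact hconst

theorem Matrix.det_updateRow_one {n R : Type*} [Fintype n] [DecidableEq n] [CommRing R]
    (i : n) (v : n → R) : (Matrix.updateRow (1 : Matrix n n R) i v).det = v i := by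
  have hv : ∑ k, v k • (1 : Matrix n n R) k = v := by
    ext j
    simp [Matrix.one_apply]
  simpa [hv] using Matrix.det_updateRow_sum (1 : Matrix n n R) i v

theorem hasDerivAt_det_exp_smul_zero {n : Type*} [Fintype n] [DecidableEq n]
    (X : Matrix n n ℝ) :
    HasDerivAt (fun t : ℝ => (NormedSpace.exp (t • X)).det) X.trace 0 := by
  -- The identity map, from the operator norm on matrices (for which `exp` is differentiated)
  -- to the sup norm on `n → n → ℝ` (on which the determinant is a continuous multilinear map).
  let rows : Matrix n n ℝ →L[ℝ] (n → n → ℝ) :=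
    LinearMap.toContinuousLinearMap (Matrix.ofLinearEquiv ℝ).symm.toLinearMap
  let detRows : ContinuousMultilinearMap ℝ (fun _ : n => n → ℝ) ℝ :=
    ⟨Matrix.detRowAlternating.toMultilinearMap, continuous_id.matrix_det⟩
  have hexp := hasDerivAt_exp_smul_const (𝕂 := ℝ) X 0
  rw [zero_smul, NormedSpace.exp_zero, one_mul] at hexp
  have h := (detRows.hasFDerivAt (rows 1)).comp_hasDerivAt_of_eq 0
    (rows.hasFDerivAt.comp_hasDerivAt 0 hexp) (by simp)
  refine h.congr_deriv ?_
  rw [ContinuousMultilinearMap.linearDeriv_apply]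
  exact Finset.sum_congr rfl fun i _ => Matrix.det_updateRow_one i (X i)

theorem Matrix.det_exp {n : Type*} [Fintype n] [DecidableEq n] (X : Matrix n n ℝ) :
    (NormedSpace.exp X).det = Real.exp X.trace := by
  have hmul : ∀ s t : ℝ, (NormedSpace.exp ((s + t) • X)).det =
      (NormedSpace.exp (s • X)).det * (NormedSpace.exp (t • X)).det := fun s t => by
    rw [add_smul, Matrix.exp_add_of_commute _ _ (((Commute.refl X).smul_left s).smul_right t),
      Matrix.det_mul]
  simpa using
    Real.eq_exp_mul_of_map_add_eq_mul hmul (by simp) (hasDerivAt_det_exp_smul_zero X) 1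

theorem gammaU_eq_exp_mul_gammaU_neg {d : ℕ} {X : Matrix (Fin d) (Fin d) ℝ}
    (hX : ‖X‖ < 2 * π) : gammaU X = NormedSpace.exp X * gammaU (-X) := by
  rw [gammaU, gammaU, tsum_bernoulli'_smul_neg_pow]
  exact (exp_mul_tsum_bernoulli_smul_pow hX).symm

/-- For `‖X‖ < 2π` with `γ_u(−X)` invertible, `γ_u(X)·(γ_u(−X))⁻¹ = exp(X)` and hence
`det(γ_u(X)·(γ_u(−X))⁻¹) = exp(trace X)`. -/
theorem gammaU_mul_inv_gammaU_neg {d : ℕ} (X : Matrix (Fin d) (Fin d) ℝ)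
    (hX : ‖X‖ < 2 * Real.pi) (hinv : IsUnit (gammaU (-X))) :
    gammaU X * (gammaU (-X))⁻¹ = NormedSpace.exp X ∧
    (gammaU X * (gammaU (-X))⁻¹).det = Real.exp X.trace := by
  have hdet : IsUnit (gammaU (-X)).det := (Matrix.isUnit_iff_isUnit_det _).mp hinv
  have hexp : gammaU X * (gammaU (-X))⁻¹ = NormedSpace.exp X := by
    rw [gammaU_eq_exp_mul_gammaU_neg hX, Matrix.mul_nonsing_inv_cancel_right _ _ hdet]
  exact ⟨hexp, by rw [hexp, Matrix.det_exp]⟩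
end

section
/- Let C : Fin d → Fin d → Fin d → ℝ (written C^{μν}_λ := C μ ν λ) be antisymmetric in its two upper indices, i.e. C^{μν}_λ = −C^{νμ}_λ. Let A : Fin d → ℝ and let Â be the d×d matrix with entries Â^μ_ν := Σ_σ C^{σμ}_ν·A_σ (μ the row index, ν the column index). Assume ‖Â‖ < 2π and that γ_u(−Â) is invertible, and set ρ_u := (γ_u(−Â))⁻¹. Then (det(γ_u(Â)·ρ_u))⁻¹ = exp(Σ_{μ,σ} C^{μσ}_μ·A_σ). -/
open scoped Matrix

attribute [local instance] Matrix.linftyOpNormedRing Matrix.linftyOpNormedAlgebra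

/-!
The generating functions `t eᵗ/(eᵗ - 1) = eᵗ · t/(eᵗ - 1)` of `B'_k` and of `B_k = (-1)ᵏ B'_k`
give `γ_u(X) = exp(X) γ_u(-X)` in any Banach algebra, as soon as the series of `γ_u(-X)`
converges absolutely; for a matrix this is forced by the invertibility of `γ_u(-X)`, since a
divergent `tsum` is `0`. Hence `γ_u(Â) ρ_u = exp(Â)`, and
`det exp(Â) = exp(tr Â) = exp(C^{μσ}_μ A_σ)` by Jacobi's formula and antisymmetry of `C`.
-/

open PowerSeries in
theorem bernoulli'PowerSeries_eq_exp_mul :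
    bernoulli'PowerSeries ℚ = exp ℚ * bernoulliPowerSeries ℚ := by
  have hexp : exp ℚ - 1 ≠ 0 := fun h => by simpa using congrArg (coeff 1) h
  refine mul_right_cancel₀ hexp ?_
  rw [bernoulli'PowerSeries_mul_exp_sub_one, mul_assoc, bernoulliPowerSeries_mul_exp_sub_one,
    mul_comm]

open PowerSeries Nat Finset in
theorem bernoulli'_div_factorial_eq_sum_antidiagonal (n : ℕ) :
    (bernoulli' n / n ! : ℚ) =
      ∑ kl ∈ antidiagonal n, (kl.1 ! : ℚ)⁻¹ * (bernoulli kl.2 / kl.2 !) := by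
  simpa [bernoulli'PowerSeries, bernoulliPowerSeries, coeff_mul] using
    congrArg (coeff n) bernoulli'PowerSeries_eq_exp_mul

open Nat in
theorem bernoulli'_smul_neg_pow {𝔸 : Type*} [Ring 𝔸] [Algebra ℝ 𝔸] (x : 𝔸) (k : ℕ) :
    ((bernoulli' k : ℝ) / (k ! : ℝ)) • (-x) ^ k = ((bernoulli k : ℝ) / (k ! : ℝ)) • x ^ k := by
  rw [← neg_one_smul ℝ x, smul_pow, smul_smul, bernoulli]
  push_cast
  ring_nf

open NormedSpace Nat Finset in
theorem tsum_bernoulli'_smul_pow_eq_exp_mul {𝔸 : Type*} [NormedRing 𝔸] [NormedAlgebra ℝ 𝔸]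
    [CompleteSpace 𝔸] (x : 𝔸)
    (hx : Summable fun k => ‖((bernoulli' k : ℝ) / (k ! : ℝ)) • (-x) ^ k‖) :
    ∑' k, ((bernoulli' k : ℝ) / (k ! : ℝ)) • x ^ k =
      exp x * ∑' k, ((bernoulli' k : ℝ) / (k ! : ℝ)) • (-x) ^ k := by
  simp only [bernoulli'_smul_neg_pow] at hx ⊢
  rw [exp_eq_tsum ℝ, tsum_mul_tsum_eq_tsum_sum_antidiagonal_of_summable_norm
    (norm_expSeries_summable' x) hx]
  refine tsum_congr fun n => ?_
  rw [sum_congr rfl fun kl hkl => by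
    rw [smul_mul_smul_comm, ← pow_add, mem_antidiagonal.mp hkl], ← sum_smul]
  congr 1
  have h := congrArg (Rat.cast (K := ℝ)) (bernoulli'_div_factorial_eq_sum_antidiagonal n)
  push_cast at h
  exact h

theorem summable_of_isUnit_tsum {R ι : Type*} [Semiring R] [TopologicalSpace R] {f : ι → R}
    (h : IsUnit (∑' i, f i)) : Summable f := by
  by_contra hf
  rw [tsum_eq_zero_of_not_summable hf, isUnit_zero_iff] at h
  have := subsingleton_of_zero_eq_one h
  exact hf (Subsingleton.elim f 0 ▸ summable_zero)

theorem eq_mul_exp_of_hasDerivAt {g : ℝ → ℝ} {c : ℝ} (hg : ∀ t, HasDerivAt g (g t * c) t)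
    (t : ℝ) : g t = g 0 * Real.exp (c * t) := by
  have hconst (s : ℝ) : HasDerivAt (fun s => g s * Real.exp (-(c * s))) 0 s := by
    have he : HasDerivAt (fun s => Real.exp (-(c * s))) (Real.exp (-(c * s)) * -c) s := by
      simpa using ((hasDerivAt_id s).const_mul c).neg.exp
    exact ((hg s).mul he).congr_deriv (by ring)
  have h := is_const_of_deriv_eq_zero (fun s => (hconst s).differentiableAt)
    (fun s => (hconst s).deriv) t 0
  simp only [mul_zero, neg_zero, Real.exp_zero, mul_one] at h
  rw [← h, mul_assoc, ← Real.exp_add]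
  simp

namespace Matrix

variable {n : Type*} [Fintype n] [DecidableEq n]

theorem hasDerivAt_apply {f : ℝ → Matrix n n ℝ} {f' : Matrix n n ℝ} {t : ℝ}
    (hf : HasDerivAt f f' t) (i j : n) : HasDerivAt (fun s => f s i j) (f' i j) t :=
  (entryLinearMap ℝ ℝ i j).toContinuousLinearMap.hasFDerivAt.comp_hasDerivAt t hf

open Finset in
theorem prod_updateCol_perm (M : Matrix n n ℝ) (i : n) (c : n → ℝ) (σ : Equiv.Perm n) :
    ∏ j, M.updateCol i c (σ j) j = (∏ j ∈ univ.erase i, M (σ j) j) * c (σ i) := by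
  rw [← prod_erase_mul univ _ (mem_univ i), updateCol_self]
  congr 1
  exact prod_congr rfl fun j hj => updateCol_ne (ne_of_mem_erase hj)

open Finset in
theorem hasDerivAt_det {f : ℝ → Matrix n n ℝ} {f' : Matrix n n ℝ} {t : ℝ}
    (hf : HasDerivAt f f' t) :
    HasDerivAt (fun s => (f s).det) (∑ i, ((f t).updateCol i (fun k => f' k i)).det) t := by
  have hprod (σ : Equiv.Perm n) : HasDerivAt (fun s => ∏ i, f s (σ i) i)
      (∑ i, (∏ j ∈ univ.erase i, f t (σ j) j) * f' (σ i) i) t :=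
    HasDerivAt.fun_finsetProd fun i _ => hasDerivAt_apply hf (σ i) i
  have hsum := HasDerivAt.fun_sum fun σ (_ : σ ∈ univ) => (hprod σ).const_mul (σ.sign : ℝ)
  simp only [det_apply', prod_updateCol_perm]
  rw [sum_comm]
  simpa only [mul_sum] using hsum

open Finset in
theorem sum_det_updateCol_mul (E M : Matrix n n ℝ) :
    ∑ i, (E.updateCol i (fun k => (E * M) k i)).det = E.det * M.trace := by
  have hcol (i : n) :
      E.updateCol i (fun k => (E * M) k i) =
        E * (1 : Matrix n n ℝ).updateCol i (fun k => M k i) := by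
    rw [mul_updateCol, mul_one]
    rfl
  simp only [hcol, det_mul, ← cramer_apply, cramer_one, Module.End.one_apply, ← mul_sum]
  rfl

open NormedSpace in
theorem hasDerivAt_det_exp_smul (M : Matrix n n ℝ) (t : ℝ) :
    HasDerivAt (fun s : ℝ => (exp (s • M)).det) ((exp (t • M)).det * M.trace) t :=
  (hasDerivAt_det (hasDerivAt_exp_smul_const M t)).congr_deriv (sum_det_updateCol_mul _ _)

open NormedSpace in
theorem det_exp_s4 (M : Matrix n n ℝ) : (exp M).det = Real.exp M.trace := by
  simpa using eq_mul_exp_of_hasDerivAt (hasDerivAt_det_exp_smul M) 1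

end Matrix

theorem Matrix.trace_of_sum_mul_of_antisymm {n R : Type*} [Fintype n] [CommRing R]
    (C : n → n → n → R) (hC : ∀ μ ν lam, C μ ν lam = - C ν μ lam) (A : n → R) :
    (Matrix.of fun μ ν => ∑ σ, C σ μ ν * A σ).trace = - ∑ μ, ∑ σ, C μ σ μ * A σ := by
  simp only [Matrix.trace, Matrix.diag_apply, Matrix.of_apply, ← Finset.sum_neg_distrib]
  exact Finset.sum_congr rfl fun μ _ => Finset.sum_congr rfl fun σ _ => by rw [hC σ μ μ]; ring

theorem integrating_factor_universal_general {d : ℕ} (C : Fin d → Fin d → Fin d → ℝ)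
    (hC : ∀ μ ν lam, C μ ν lam = - C ν μ lam)
    (A : Fin d → ℝ)
    (Ahat : Matrix (Fin d) (Fin d) ℝ)
    (hAhat : Ahat = Matrix.of fun μ ν => ∑ σ, C σ μ ν * A σ)
    (hinv : IsUnit (gammaU (-Ahat)))
    (ρ : Matrix (Fin d) (Fin d) ℝ)
    (hρ : ρ = (gammaU (-Ahat))⁻¹) :
    ((gammaU Ahat * ρ).det)⁻¹ = Real.exp (∑ μ, ∑ σ, C μ σ μ * A σ) := by
  have hsum : Summable fun k => ((bernoulli' k : ℝ) / (Nat.factorial k : ℝ)) • (-Ahat) ^ k :=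
    summable_of_isUnit_tsum hinv
  have hγ : gammaU Ahat = NormedSpace.exp Ahat * gammaU (-Ahat) :=
    tsum_bernoulli'_smul_pow_eq_exp_mul Ahat (summable_norm_iff.2 hsum)
  have hγρ : gammaU (-Ahat) * ρ = 1 :=
    hρ ▸ Matrix.mul_nonsing_inv _ ((Matrix.isUnit_iff_isUnit_det _).1 hinv)
  rw [hγ, mul_assoc, hγρ, mul_one, Matrix.det_exp_s4, hAhat,
    Matrix.trace_of_sum_mul_of_antisymm C hC, Real.exp_neg, inv_inv]

/-- Proposition 1 (universal realization): the integrating factor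
`M_A = (det(γ_u(Â)·ρ_u(Â)))⁻¹` with `ρ_u = (γ_u(−Â))⁻¹` equals `exp(C^{μσ}_μ A_σ)`. -/
theorem integrating_factor_universal {d : ℕ} (C : Fin d → Fin d → Fin d → ℝ)
    (hC : ∀ μ ν lam, C μ ν lam = - C ν μ lam)
    (A : Fin d → ℝ)
    (Ahat : Matrix (Fin d) (Fin d) ℝ)
    (hAhat : Ahat = Matrix.of fun μ ν => ∑ σ, C σ μ ν * A σ)
    (hnorm : ‖Ahat‖ < 2 * Real.pi)
    (hinv : IsUnit (gammaU (-Ahat)))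
    (ρ : Matrix (Fin d) (Fin d) ℝ)
    (hρ : ρ = (gammaU (-Ahat))⁻¹) :
    ((gammaU Ahat * ρ).det)⁻¹ = Real.exp (∑ μ, ∑ σ, C μ σ μ * A σ) :=
  integrating_factor_universal_general C hC A Ahat hAhat hinv ρ hρ
end

section
/- Let C : Fin d → Fin d → Fin d → ℝ be antisymmetric in its two upper indices and satisfy the Jacobi identity, let t^σ := Σ_ν C^{νσ}_ν, let A : Fin d → ℝ, and let Â be the matrix Â^μ_ν := Σ_σ C^{σμ}_ν·A_σ with ‖Â‖ < 2π. Then γ_u(Â).mulVec t = t, i.e. Σ_ξ (γ_u(Â))^σ_ξ·t^ξ = t^σ for all σ. -/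
open scoped Matrix

attribute [local instance] Matrix.linftyOpNormedRing Matrix.linftyOpNormedAlgebra

open Real in
/-- Bound on the Bernoulli-number coefficients of `γ_u`. -/
lemma abs_bernoulli'_div_factorial_le (k : ℕ) :
    |(bernoulli' k : ℝ)| / (Nat.factorial k : ℝ) ≤ 4 / (2 * π) ^ k := by
  have hπ : (0:ℝ) < π := Real.pi_pos
  match k with
  | 0 => simp [bernoulli'_zero]
  | 1 =>
      rw [bernoulli'_one]
      push_cast
      rw [abs_of_nonneg (by norm_num : (0:ℝ) ≤ 1/2)]
      simp only [Nat.factorial_one, Nat.cast_one, pow_one]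
      rw [div_le_div_iff₀ (by norm_num) (by positivity)]
      nlinarith [Real.pi_le_four]
  | (n+2) =>
      rcases Nat.even_or_odd (n+2) with he | ho
      · obtain ⟨m, hm⟩ := he
        have hm2 : n + 2 = 2 * m := by omega
        have hm1 : 1 ≤ m := by omega
        rw [hm2]
        -- value of `ζ(2m)` in terms of `bernoulli (2m)`
        have hS := hasSum_zeta_nat (k := m) (by omega)
        set E : ℝ := (-1 : ℝ) ^ (m + 1) * (2 : ℝ) ^ (2 * m - 1) * π ^ (2 * m) *
          bernoulli (2 * m) / ((2 * m).factorial : ℝ) with hE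
        have hE0 : 0 ≤ E :=
          hasSum_le (fun n => by positivity) hasSum_zero hS
        have hle : E ≤ π ^ 2 / 6 := by
          refine hasSum_le (fun j => ?_) hS hasSum_zeta_two
          rcases Nat.eq_zero_or_pos j with hj | hj
          · subst hj
            norm_num [zero_pow (by omega : 2 * m ≠ 0)]
          · have hj1 : (1:ℝ) ≤ (j:ℝ) := by exact_mod_cast hj
            have : (j:ℝ) ^ 2 ≤ (j:ℝ) ^ (2 * m) :=
              pow_le_pow_right₀ hj1 (by omega)
            have h2 : (0:ℝ) < (j:ℝ) ^ 2 := by positivity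
            exact one_div_le_one_div_of_le h2 this
        have hE2 : E ≤ 2 := by
          nlinarith [Real.pi_lt_d2]
        set P : ℝ := (2 : ℝ) ^ (2 * m - 1) * π ^ (2 * m) with hPdef
        have hP : 0 < P := by positivity
        have hfac : (0:ℝ) < (((2 * m).factorial : ℝ) : ℝ) := by
          exact_mod_cast Nat.factorial_pos (2 * m)
        -- |bernoulli (2m)| / (2m)! = E / P
        have habsE : |E| = P * |(bernoulli (2 * m) : ℝ)| / (((2 * m).factorial : ℝ) : ℝ) := by
          rw [hE, hPdef, abs_div, abs_mul, abs_mul, abs_mul, abs_pow, abs_pow, abs_pow,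
            abs_neg, abs_one, one_pow, one_mul, abs_of_pos hπ,
            abs_of_pos (by norm_num : (0:ℝ) < 2), abs_of_pos hfac]
        have hBval : |(bernoulli (2 * m) : ℝ)| / (((2 * m).factorial : ℝ) : ℝ) = E / P := by
          rw [eq_div_iff (ne_of_gt hP), ← abs_of_nonneg hE0, habsE]
          field_simp
        have hbb : (bernoulli' (2 * m) : ℝ) = (bernoulli (2 * m) : ℝ) := by
          rw [bernoulli_eq_bernoulli'_of_ne_one (by omega)]
        have h2P : (2 * π) ^ (2 * m) = 2 * P := by
          rw [mul_pow, hPdef]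
          have : (2:ℝ) ^ (2 * m) = 2 * (2:ℝ) ^ (2 * m - 1) := by
            rw [← pow_succ']
            congr 1
            omega
          rw [this]
          ring
        rw [hbb, hBval, h2P]
        rw [div_le_div_iff₀ hP (by positivity)]
        nlinarith
      · rw [bernoulli'_eq_zero_of_odd ho (by omega)]
        simp
        positivity

open Real in
lemma gammaU_summable {d : ℕ} (X : Matrix (Fin d) (Fin d) ℝ) (hX : ‖X‖ < 2 * π) :
    Summable (fun k : ℕ => ((bernoulli' k : ℝ) / (Nat.factorial k : ℝ)) • X ^ k) := by
  have hπ : (0:ℝ) < π := Real.pi_pos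
  apply Summable.of_norm
  have hg : Summable (fun k : ℕ => 4 * (‖X‖ / (2 * π)) ^ k) := by
    refine Summable.mul_left 4 (summable_geometric_of_lt_one (by positivity) ?_)
    rw [div_lt_one (by positivity)]
    exact hX
  have hle : ∀ k : ℕ, ‖((bernoulli' k : ℝ) / (Nat.factorial k : ℝ)) • X ^ k‖
      ≤ 4 * (‖X‖ / (2 * π)) ^ k := by
    intro k
    have h1 : ‖((bernoulli' k : ℝ) / (Nat.factorial k : ℝ)) • X ^ k‖
        = |(bernoulli' k : ℝ) / (Nat.factorial k : ℝ)| * ‖X ^ k‖ := by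
      rw [norm_smul, Real.norm_eq_abs]
    have hfac : (0:ℝ) < ((Nat.factorial k : ℕ) : ℝ) := by
      exact_mod_cast Nat.factorial_pos k
    have h2 : |(bernoulli' k : ℝ) / (Nat.factorial k : ℝ)|
        = |(bernoulli' k : ℝ)| / (Nat.factorial k : ℝ) := by
      rw [abs_div, abs_of_pos hfac]
    have h3 : ‖X ^ k‖ ≤ ‖X‖ ^ k := by
      cases k with
      | zero =>
          simp only [pow_zero]
          rw [← Matrix.diagonal_one, Matrix.linfty_opNorm_diagonal]
          refine (pi_norm_le_iff_of_nonneg (by norm_num)).2 fun i => ?_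
          simp
      | succ n => exact norm_pow_le' X n.succ_pos
    calc ‖((bernoulli' k : ℝ) / (Nat.factorial k : ℝ)) • X ^ k‖
        = (|(bernoulli' k : ℝ)| / (Nat.factorial k : ℝ)) * ‖X ^ k‖ := by rw [h1, h2]
      _ ≤ (4 / (2 * π) ^ k) * ‖X‖ ^ k := by
          refine mul_le_mul (abs_bernoulli'_div_factorial_le k) h3 (norm_nonneg _) ?_
          positivity
      _ = 4 * (‖X‖ / (2 * π)) ^ k := by
          rw [div_pow]
          ring
  exact Summable.of_nonneg_of_le (fun k => norm_nonneg _) hle hg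

/-- The universal matrix `γ_u(Â)` fixes the modular vector `t^σ = Σ_ν C^{νσ}_ν`:
`Σ_ξ (γ_u(Â))^σ_ξ t^ξ = t^σ`. -/
theorem gammaU_fixes_modular_vector {d : ℕ} (C : Fin d → Fin d → Fin d → ℝ)
    (hC : ∀ μ ν lam, C μ ν lam = - C ν μ lam)
    (hJac : ∀ α ν β ξ, ∑ σ, (C ν σ α * C β ξ σ + C β σ α * C ξ ν σ + C ξ σ α * C ν β σ) = 0)
    (t : Fin d → ℝ) (ht : t = fun σ => ∑ ν, C ν σ ν)
    (A : Fin d → ℝ)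
    (Ahat : Matrix (Fin d) (Fin d) ℝ)
    (hAhat : Ahat = Matrix.of fun μ ν => ∑ σ, C σ μ ν * A σ)
    (hnorm : ‖Ahat‖ < 2 * Real.pi) :
    (gammaU Ahat).mulVec t = t := by
  -- the key contracted Jacobi identity: `Σ_ξ C^{ρσ}_ξ t^ξ = 0`
  have key : ∀ ρ σ, (∑ ξ, C ρ σ ξ * ∑ ν, C ν ξ ν) = 0 := by
    intro ρ σ
    have h23 : (∑ α, ∑ x, C ρ x α * C σ α x) + (∑ α, ∑ x, C σ x α * C α ρ x) = 0 := by
      have e1 : (∑ α, ∑ x, C ρ x α * C σ α x) = ∑ α, ∑ x, C ρ α x * C σ x α :=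
        Finset.sum_comm
      rw [e1, ← Finset.sum_add_distrib]
      refine Finset.sum_eq_zero fun α _ => ?_
      rw [← Finset.sum_add_distrib]
      refine Finset.sum_eq_zero fun x _ => ?_
      rw [hC α ρ x]
      ring
    have h0 : (∑ α, ∑ x, C α x α * C ρ σ x)
        + ((∑ α, ∑ x, C ρ x α * C σ α x) + (∑ α, ∑ x, C σ x α * C α ρ x)) = 0 := by
      rw [← Finset.sum_add_distrib, ← Finset.sum_add_distrib]
      refine Finset.sum_eq_zero fun α _ => ?_
      rw [← Finset.sum_add_distrib, ← Finset.sum_add_distrib]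
      refine Eq.trans (Finset.sum_congr rfl fun x _ => by ring) (hJac α α ρ σ)
    rw [h23, add_zero] at h0
    calc ∑ ξ, C ρ σ ξ * ∑ ν, C ν ξ ν
        = ∑ ξ, ∑ ν, C ν ξ ν * C ρ σ ξ := by
          refine Finset.sum_congr rfl fun ξ _ => ?_
          rw [Finset.mul_sum]
          exact Finset.sum_congr rfl fun ν _ => mul_comm _ _
      _ = ∑ ν, ∑ ξ, C ν ξ ν * C ρ σ ξ := Finset.sum_comm
      _ = 0 := h0
  -- the matrix `Â` annihilates `t`
  have hA0 : Ahat.mulVec t = 0 := by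
    funext μ
    show ∑ ν, Ahat μ ν * t ν = (0 : Fin d → ℝ) μ
    rw [hAhat, ht]
    simp only [Matrix.of_apply, Pi.zero_apply]
    calc ∑ ν, (∑ ρ, C ρ μ ν * A ρ) * (∑ κ, C κ ν κ)
        = ∑ ν, ∑ ρ, A ρ * (C ρ μ ν * (∑ κ, C κ ν κ)) := by
          refine Finset.sum_congr rfl fun ν _ => ?_
          rw [Finset.sum_mul]
          exact Finset.sum_congr rfl fun ρ _ => by ring
      _ = ∑ ρ, A ρ * ∑ ν, C ρ μ ν * (∑ κ, C κ ν κ) := by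
          rw [Finset.sum_comm]
          exact Finset.sum_congr rfl fun ρ _ => (Finset.mul_sum _ _ _).symm
      _ = 0 := Finset.sum_eq_zero fun ρ _ => by rw [key ρ μ, mul_zero]
  -- hence all positive powers annihilate `t`
  have hpow : ∀ n : ℕ, (Ahat ^ (n + 1)).mulVec t = 0 := by
    intro n
    rw [pow_succ, ← Matrix.mulVec_mulVec, hA0, Matrix.mulVec_zero]
  -- the linear map `M ↦ M.mulVec t`, as a continuous linear map
  let L : Matrix (Fin d) (Fin d) ℝ →ₗ[ℝ] (Fin d → ℝ) :=
    { toFun := fun M => M.mulVec t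
      map_add' := fun M N => Matrix.add_mulVec M N t
      map_smul' := fun c M => by
        simp [Matrix.smul_mulVec] }
  let Lc : Matrix (Fin d) (Fin d) ℝ →L[ℝ] (Fin d → ℝ) := LinearMap.toContinuousLinearMap L
  have hsum := gammaU_summable Ahat hnorm
  have h1 : HasSum
      (fun k : ℕ => Lc (((bernoulli' k : ℝ) / (Nat.factorial k : ℝ)) • Ahat ^ k))
      (Lc (gammaU Ahat)) := hsum.hasSum.mapL Lc
  have h2 : ∀ k : ℕ, Lc (((bernoulli' k : ℝ) / (Nat.factorial k : ℝ)) • Ahat ^ k)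
      = ((bernoulli' k : ℝ) / (Nat.factorial k : ℝ)) • ((Ahat ^ k).mulVec t) := by
    intro k
    simp [Lc, L]
  have h3 : HasSum
      (fun k : ℕ => Lc (((bernoulli' k : ℝ) / (Nat.factorial k : ℝ)) • Ahat ^ k)) t := by
    have h0 : Lc (((bernoulli' 0 : ℝ) / (Nat.factorial 0 : ℝ)) • Ahat ^ 0) = t := by
      rw [h2]
      simp [Matrix.one_mulVec]
    have := hasSum_single (f := fun k : ℕ =>
      Lc (((bernoulli' k : ℝ) / (Nat.factorial k : ℝ)) • Ahat ^ k)) 0 ?_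
    · rwa [h0] at this
    · intro b hb
      obtain ⟨n, rfl⟩ : ∃ n, b = n + 1 := ⟨b - 1, by omega⟩
      simp only [h2, hpow, smul_zero]
  have : Lc (gammaU Ahat) = t := h1.unique h3
  exact this
end

section
/- Let C : Fin d → Fin d → Fin d → ℝ be antisymmetric in its two upper indices, and t^σ := Σ_ν C^{νσ}_ν. Let M, Q : (Fin d → ℝ) → ℝ be continuously differentiable and f : (Fin d → ℝ) → ℝ be twice continuously differentiable, and suppose δM, δQ : (Fin d → ℝ) → ℝ satisfy, for all x: δM(x) = M(x)·Σ_σ t^σ·∂_σ f(x) + {M,f}(x) and δQ(x) = {Q,f}(x). Then for all x: Q(x)·δM(x) + M(x)·δQ(x) = Σ_ν ∂_ν( y ↦ Σ_{ξ,σ} y_ξ·C^{νσ}_ξ·M(y)·Q(y)·∂_σ f(y) )(x). -/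
/-- Partial derivative in the `μ`-th coordinate direction. -/
noncomputable def pd {d : ℕ} (μ : Fin d) (g : (Fin d → ℝ) → ℝ) (x : Fin d → ℝ) : ℝ :=
  fderiv ℝ g x (Pi.single μ 1)

/-- The Lie-algebra-type Poisson bracket `{g,h}(x) = Σ x_λ C^{μν}_λ ∂_μ g ∂_ν h`. -/
noncomputable def pb {d : ℕ} (C : Fin d → Fin d → Fin d → ℝ) (g h : (Fin d → ℝ) → ℝ)
    (x : Fin d → ℝ) : ℝ :=
  ∑ lam, ∑ μ, ∑ ν, x lam * C μ ν lam * pd μ g x * pd ν h x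

/-! The current `J^ν(y) = Σ_{ξ,σ} y_ξ C^{νσ}_ξ G(y) ∂_σ f(y)` has divergence
`G t^σ ∂_σ f + {G, f} + Σ y_ξ C^{νσ}_ξ G ∂_ν ∂_σ f`: the first term comes from differentiating
the coordinate `y_ξ`, and the last vanishes since the Hessian of `f` is symmetric while `C` is
antisymmetric in its upper indices. For `G = M Q` the Leibniz rule `{MQ, f} = Q{M, f} + M{Q, f}`
turns this into `Q δM + M δQ`. -/

open Finset

theorem Finset.sum_antisymm_mul_symm_eq_zero {ι R : Type*} [Fintype ι] [Ring R]
    [IsAddTorsionFree R] {A B : ι → ι → R} (hA : ∀ i j, A i j = -A j i)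
    (hB : ∀ i j, B i j = B j i) : ∑ i, ∑ j, A i j * B i j = 0 := by
  rw [← self_eq_neg]
  calc ∑ i, ∑ j, A i j * B i j = ∑ i, ∑ j, A j i * B j i := sum_comm
    _ = -∑ i, ∑ j, A i j * B i j := by
      simp only [← sum_neg_distrib, ← neg_mul, ← hA, ← hB]

section PartialDerivative

variable {d : ℕ}

lemma pd_mul {μ : Fin d} {g h : (Fin d → ℝ) → ℝ} {x : Fin d → ℝ}
    (hg : DifferentiableAt ℝ g x) (hh : DifferentiableAt ℝ h x) :
    pd μ (fun y => g y * h y) x = pd μ g x * h x + g x * pd μ h x := by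
  simp only [pd, fderiv_fun_mul hg hh, add_apply, smul_apply, smul_eq_mul]
  ring

lemma pd_apply_mul_const (μ ξ : Fin d) (c : ℝ) (x : Fin d → ℝ) :
    pd μ (fun y => y ξ * c) x = if ξ = μ then c else 0 := by
  rw [pd, ((hasFDerivAt_apply ξ x).mul_const c).fderiv]
  simp [Pi.single_apply]

lemma pd_sum {ι : Type*} {s : Finset ι} {μ : Fin d} {F : ι → (Fin d → ℝ) → ℝ}
    {x : Fin d → ℝ} (hF : ∀ i ∈ s, DifferentiableAt ℝ (F i) x) :
    pd μ (fun y => ∑ i ∈ s, F i y) x = ∑ i ∈ s, pd μ (F i) x := by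
  simp [pd, fderiv_fun_sum hF]

lemma ContDiff.pd {n : WithTop ℕ∞} {f : (Fin d → ℝ) → ℝ} (hf : ContDiff ℝ (n + 1) f)
    (μ : Fin d) : ContDiff ℝ n (pd μ f) :=
  (hf.fderiv_right le_rfl).clm_apply contDiff_const

lemma pd_pd_comm {f : (Fin d → ℝ) → ℝ} (hf : ContDiff ℝ 2 f) (μ ν : Fin d) (x : Fin d → ℝ) :
    pd μ (pd ν f) x = pd ν (pd μ f) x := by
  have hf' : DifferentiableAt ℝ (fderiv ℝ f) x :=
    ((hf.fderiv_right (m := 1) le_rfl).differentiable one_ne_zero).differentiableAt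
  have hflip (v : Fin d → ℝ) :
      fderiv ℝ (fun y => fderiv ℝ f y v) x = (fderiv ℝ (fderiv ℝ f) x).flip v := by
    simp [fderiv_clm_apply hf' (differentiableAt_const v)]
  change fderiv ℝ (fun y => fderiv ℝ f y _) x _ = fderiv ℝ (fun y => fderiv ℝ f y _) x _
  rw [hflip, hflip]
  exact hf.contDiffAt.isSymmSndFDerivAt (by simp) _ _

lemma pd_apply_mul_const_mul_mul {μ ξ : Fin d} (c : ℝ) {G h : (Fin d → ℝ) → ℝ}
    {x : Fin d → ℝ} (hG : DifferentiableAt ℝ G x) (hh : DifferentiableAt ℝ h x) :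
    pd μ (fun y => y ξ * c * G y * h y) x
      = (if ξ = μ then c * G x * h x else 0) + x ξ * c * pd μ G x * h x
        + x ξ * c * G x * pd μ h x := by
  have hξ : DifferentiableAt ℝ (fun y : Fin d → ℝ => y ξ * c) x := by fun_prop
  rw [pd_mul (g := fun y => y ξ * c * G y) (hξ.mul hG) hh, pd_mul hξ hG, pd_apply_mul_const]
  split_ifs <;> ring

end PartialDerivative

section PoissonBracket

variable {d : ℕ} {C : Fin d → Fin d → Fin d → ℝ}

lemma pb_mul_left {M Q : (Fin d → ℝ) → ℝ} (f : (Fin d → ℝ) → ℝ) {x : Fin d → ℝ}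
    (hM : DifferentiableAt ℝ M x) (hQ : DifferentiableAt ℝ Q x) :
    pb C (fun y => M y * Q y) f x = Q x * pb C M f x + M x * pb C Q f x := by
  simp only [pb, pd_mul hM hQ, mul_sum, ← sum_add_distrib]
  exact sum_congr rfl fun _ _ => sum_congr rfl fun _ _ => sum_congr rfl fun _ _ => by ring

theorem sum_pd_current (hC : ∀ μ ν lam, C μ ν lam = -C ν μ lam) {G f : (Fin d → ℝ) → ℝ}
    (hG : Differentiable ℝ G) (hf : ContDiff ℝ 2 f) (x : Fin d → ℝ) :
    ∑ ν, pd ν (fun y => ∑ ξ, ∑ σ, y ξ * C ν σ ξ * G y * pd σ f y) x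
      = G x * ∑ σ, (∑ ν, C ν σ ν) * pd σ f x + pb C G f x := by
  have hdf (σ : Fin d) : Differentiable ℝ (pd σ f) :=
    (hf.pd (n := 1) σ).differentiable one_ne_zero
  have hJ (ν ξ σ : Fin d) : DifferentiableAt ℝ (fun y => y ξ * C ν σ ξ * G y * pd σ f y) x :=
    (((differentiableAt_apply ξ x).mul_const _).mul (hG x)).mul (hdf σ x)
  have hdiag : ∑ ν, ∑ ξ, ∑ σ, (if ξ = ν then C ν σ ξ * G x * pd σ f x else 0)
      = G x * ∑ σ, (∑ ν, C ν σ ν) * pd σ f x := by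
    calc _ = ∑ ν, ∑ σ, C ν σ ν * G x * pd σ f x :=
          sum_congr rfl fun ν _ => by rw [sum_comm]; simp
      _ = _ := by
          rw [sum_comm]
          simp only [mul_sum, sum_mul]
          exact sum_congr rfl fun _ _ => sum_congr rfl fun _ _ => by ring
  have hbracket : ∑ ν, ∑ ξ, ∑ σ, x ξ * C ν σ ξ * pd ν G x * pd σ f x = pb C G f x := by
    rw [pb, sum_comm]
  have hhess : ∑ ν, ∑ ξ, ∑ σ, x ξ * C ν σ ξ * G x * pd ν (pd σ f) x = 0 := by
    rw [sum_comm]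
    exact sum_eq_zero fun ξ _ => sum_antisymm_mul_symm_eq_zero
      (A := fun ν σ => x ξ * C ν σ ξ * G x) (fun ν σ => by rw [hC ν σ ξ]; ring)
      (pd_pd_comm hf · · x)
  have hpd (ν : Fin d) : pd ν (fun y => ∑ ξ, ∑ σ, y ξ * C ν σ ξ * G y * pd σ f y) x
      = ∑ ξ, ∑ σ, pd ν (fun y => y ξ * C ν σ ξ * G y * pd σ f y) x := by
    rw [pd_sum fun ξ _ => DifferentiableAt.fun_sum fun σ _ => hJ ν ξ σ]
    exact sum_congr rfl fun ξ _ => pd_sum fun σ _ => hJ ν ξ σ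
  simp only [hpd, pd_apply_mul_const_mul_mul _ (hG x) (hdf _ x), sum_add_distrib]
  rw [hdiag, hbracket, hhess, add_zero]

end PoissonBracket

/-- Proposition 3: if `δM = M·t^σ ∂_σ f + {M,f}` and `δQ = {Q,f}`, then
`Q·δM + M·δQ` is a total divergence. -/
theorem gauge_variation_is_total_divergence {d : ℕ} (C : Fin d → Fin d → Fin d → ℝ)
    (hC : ∀ μ ν lam, C μ ν lam = - C ν μ lam)
    (t : Fin d → ℝ) (ht : t = fun σ => ∑ ν, C ν σ ν)
    (M Q f : (Fin d → ℝ) → ℝ)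
    (hM : ContDiff ℝ 1 M) (hQ : ContDiff ℝ 1 Q) (hf : ContDiff ℝ 2 f)
    (δM δQ : (Fin d → ℝ) → ℝ)
    (hδM : ∀ x, δM x = M x * (∑ σ, t σ * pd σ f x) + pb C M f x)
    (hδQ : ∀ x, δQ x = pb C Q f x) :
    ∀ x, Q x * δM x + M x * δQ x
      = ∑ ν, pd ν (fun y => ∑ ξ, ∑ σ, y ξ * C ν σ ξ * M y * Q y * pd σ f y) x := by
  intro x
  have hMd := hM.differentiable one_ne_zero
  have hQd := hQ.differentiable one_ne_zero
  have hdiv := sum_pd_current (G := fun y => M y * Q y) hC (hMd.mul hQd) hf x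
  simp only [← mul_assoc] at hdiv
  rw [hdiv, pb_mul_left f (hMd x) (hQd x), hδM, hδQ, ht]
  ring
end
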